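/- arXiv:1909.09990 — 3 statements merged into one kernel-verified Lean document; each statement's English description precedes it below -/
import Mathlib

section
/- Let U be a real inner product space and V a real vector space with J ∈ End(V), J² = −I. Let α : V × V → U be a symmetric bilinear form and define β(X,Y) = (α(X,Y), α(X,JY)) with values in W = U ⊕ U equipped with ⟨(ξ1,ξ2),(η1,η2)⟩ = ⟨ξ1,η1⟩ − ⟨ξ2,η2⟩. If (ξ, ξ̄) ∈ S(β) ∩ S(β)^⊥, then also (ξ̄, −ξ) ∈ S(β) ∩ S(β)^⊥. -/
open scoped RealInnerProductSpace

/-! The quarter turn `T : (a, b) ↦ (b, -a)` of `U × U` sends the generator `β(X, Y)` of `S(β)` to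
`β(X, JY)`, because `J² = -1`; hence it preserves `S(β)`. Since it reverses the sign of the split
form and its inverse `-T` also preserves `S(β)`, it preserves `S(β)^⊥` as well. -/

namespace Prod

variable (R M : Type*) [CommRing R] [AddCommGroup M] [Module R M]

def quarterTurn : M × M →ₗ[R] M × M :=
  (LinearMap.snd R M M).prod (-LinearMap.fst R M M)

variable {R M}

@[simp]
theorem quarterTurn_apply (z : M × M) : quarterTurn R M z = (z.2, -z.1) := rfl

end Prod

open Prod

theorem mapsTo_quarterTurn_of_sq_eq_neg_one {R V M : Type*} [CommRing R] [AddCommGroup V]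
    [Module R V] [AddCommGroup M] [Module R M]
    (J : V →ₗ[R] V) (hJ : ∀ X : V, J (J X) = -X) (α : V →ₗ[R] V →ₗ[R] M) :
    Set.MapsTo (quarterTurn R M) {z | ∃ X Y : V, z = (α X Y, α X (J Y))}
      {z | ∃ X Y : V, z = (α X Y, α X (J Y))} := by
  rintro _ ⟨X, Y, rfl⟩
  exact ⟨X, J Y, by simp [hJ]⟩

theorem splitInner_quarterTurn_eq_zero {U : Type*} [NormedAddCommGroup U]
    [InnerProductSpace ℝ U] {S : Submodule ℝ (U × U)}
    (hS : Set.MapsTo (quarterTurn ℝ U) S S) {ξ ξ' : U}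
    (hperp : ∀ u ∈ S, ⟪ξ, u.1⟫ - ⟪ξ', u.2⟫ = 0) :
    ∀ u ∈ S, ⟪ξ', u.1⟫ - ⟪-ξ, u.2⟫ = 0 := by
  intro u hu
  have h := hperp _ (S.neg_mem (hS hu))
  simp only [Prod.fst_neg, Prod.snd_neg, quarterTurn_apply, neg_neg, inner_neg_right] at h
  rw [inner_neg_left]
  linarith

theorem stmt5_general {V U : Type*} [AddCommGroup V] [Module ℝ V]
    [NormedAddCommGroup U] [InnerProductSpace ℝ U]
    (J : V →ₗ[ℝ] V) (hJ : ∀ X : V, J (J X) = -X)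
    (α : V →ₗ[ℝ] V →ₗ[ℝ] U)
    (S : Submodule ℝ (U × U))
    (hS : S = Submodule.span ℝ {z : U × U | ∃ X Y : V, z = (α X Y, α X (J Y))})
    (ξ ξ' : U) (hmem : (ξ, ξ') ∈ S)
    (hperp : ∀ u ∈ S, ⟪ξ, u.1⟫ - ⟪ξ', u.2⟫ = 0) :
    (ξ', -ξ) ∈ S ∧ ∀ u ∈ S, ⟪ξ', u.1⟫ - ⟪-ξ, u.2⟫ = 0 := by
  have hTS : Set.MapsTo (quarterTurn ℝ U) S S := by
    subst hS
    exact (mapsTo_quarterTurn_of_sq_eq_neg_one J hJ α).submoduleSpan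
  exact ⟨hTS hmem, splitInner_quarterTurn_eq_zero hTS hperp⟩

/-- If (ξ, ξ') ∈ S(β) ∩ S(β)^⊥ then (ξ', −ξ) ∈ S(β) ∩ S(β)^⊥, where
β(X,Y) = (α(X,Y), α(X,JY)) and the inner product on U ⊕ U is
⟨(ξ₁,ξ₂),(η₁,η₂)⟩ = ⟨ξ₁,η₁⟩ − ⟨ξ₂,η₂⟩. -/
theorem stmt5 {V U : Type*} [AddCommGroup V] [Module ℝ V]
    [NormedAddCommGroup U] [InnerProductSpace ℝ U]
    (J : V →ₗ[ℝ] V) (hJ : ∀ X : V, J (J X) = -X)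
    (α : V →ₗ[ℝ] V →ₗ[ℝ] U) (hα : ∀ X Y : V, α X Y = α Y X)
    (S : Submodule ℝ (U × U))
    (hS : S = Submodule.span ℝ {z : U × U | ∃ X Y : V, z = (α X Y, α X (J Y))})
    (ξ ξ' : U) (hmem : (ξ, ξ') ∈ S)
    (hperp : ∀ u ∈ S, ⟪ξ, u.1⟫ - ⟪ξ', u.2⟫ = 0) :
    (ξ', -ξ) ∈ S ∧ ∀ u ∈ S, ⟪ξ', u.1⟫ - ⟪-ξ, u.2⟫ = 0 :=
  stmt5_general J hJ α S hS ξ ξ' hmem hperp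
end

section
/- In the setting of the previous statement, the subspace U = S(β) ∩ S(β)^⊥ is invariant under the linear map (ξ, ξ̄) ↦ (ξ̄, −ξ), and hence its dimension is even. -/
/-!
A map `T` with `T² = -1` makes a real vector space a complex one, so its real dimension is even.
The quarter turn `T(ξ, ξ') = (ξ', -ξ)` maps the generator `(α X Y, α X (J Y))` of `S(β)` to the
generator at `(X, J Y)`, and it is self-adjoint for the split form `⟪ξ, η⟫ - ⟪ξ', η'⟫`; hence it
preserves `S(β)` and its radical `S(β) ∩ S(β)^⊥`.
-/

open scoped RealInnerProductSpace

theorem Module.End.even_finrank_of_mul_self_eq_neg_one {M : Type*} [AddCommGroup M]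
    [Module ℝ M] (f : Module.End ℝ M) (hf : f * f = -1) :
    Even (Module.finrank ℝ M) := by
  let _ : Module ℂ M := Module.compHom M (Complex.lift ⟨f, hf⟩).toRingHom
  have : IsScalarTower ℝ ℂ M := ⟨fun r z m => by
    change Complex.lift ⟨f, hf⟩ (r • z) m = r • Complex.lift ⟨f, hf⟩ z m
    rw [map_smul]; rfl⟩
  rw [← Module.finrank_mul_finrank ℝ ℂ M, Complex.finrank_real_complex]
  exact even_two_mul _

section QuarterTurn

variable (R M : Type*) [Ring R] [AddCommGroup M] [Module R M]

def quarterTurn : (M × M) →ₗ[R] (M × M) :=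
  (LinearMap.snd R M M).prod (-LinearMap.fst R M M)

variable {R M}

@[simp]
theorem quarterTurn_apply (z : M × M) : quarterTurn R M z = (z.2, -z.1) := rfl

theorem quarterTurn_mul_self : quarterTurn R M * quarterTurn R M = -1 := by
  ext <;> simp

end QuarterTurn

theorem quarterTurn_le_comap_span_image {R V U : Type*} [CommRing R] [AddCommGroup V] [Module R V]
    [AddCommGroup U] [Module R U] (J : V →ₗ[R] V) (hJ : ∀ X : V, J (J X) = -X)
    (α : V →ₗ[R] V →ₗ[R] U) :
    Submodule.span R {z : U × U | ∃ X Y : V, z = (α X Y, α X (J Y))} ≤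
      (Submodule.span R {z : U × U | ∃ X Y : V, z = (α X Y, α X (J Y))}).comap
        (quarterTurn R U) := by
  rw [← Submodule.map_le_iff_le_comap, Submodule.map_span_le]
  rintro _ ⟨X, Y, rfl⟩
  exact Submodule.subset_span ⟨X, J Y, by simp [hJ]⟩

theorem inner_sub_inner_quarterTurn {U : Type*} [NormedAddCommGroup U] [InnerProductSpace ℝ U]
    (z u : U × U) :
    ⟪(quarterTurn ℝ U z).1, u.1⟫ - ⟪(quarterTurn ℝ U z).2, u.2⟫ =
      ⟪z.1, (quarterTurn ℝ U u).1⟫ - ⟪z.2, (quarterTurn ℝ U u).2⟫ := by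
  simp only [quarterTurn_apply, inner_neg_left, inner_neg_right]
  ring

theorem stmt6_general {V U : Type*} [AddCommGroup V] [Module ℝ V]
    [NormedAddCommGroup U] [InnerProductSpace ℝ U]
    (J : V →ₗ[ℝ] V) (hJ : ∀ X : V, J (J X) = -X)
    (α : V →ₗ[ℝ] V →ₗ[ℝ] U)
    (S : Submodule ℝ (U × U))
    (hS : S = Submodule.span ℝ {z : U × U | ∃ X Y : V, z = (α X Y, α X (J Y))})
    (U₀ : Submodule ℝ (U × U))
    (hU₀ : ∀ z : U × U,
      z ∈ U₀ ↔ z ∈ S ∧ ∀ u ∈ S, ⟪z.1, u.1⟫ - ⟪z.2, u.2⟫ = 0) :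
    (∀ z ∈ U₀, ((z.2 : U), -(z.1 : U)) ∈ U₀) ∧
      Even (Module.finrank ℝ U₀) := by
  set T := quarterTurn ℝ U
  have hTS : ∀ u ∈ S, T u ∈ S := hS ▸ quarterTurn_le_comap_span_image J hJ α
  have hTU₀ : ∀ z ∈ U₀, T z ∈ U₀ := by
    intro z hz
    obtain ⟨hzS, hz_perp⟩ := (hU₀ z).1 hz
    refine (hU₀ _).2 ⟨hTS z hzS, fun u hu => ?_⟩
    rw [inner_sub_inner_quarterTurn]
    exact hz_perp _ (hTS u hu)
  refine ⟨hTU₀, Module.End.even_finrank_of_mul_self_eq_neg_one (T.restrict hTU₀) ?_⟩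
  ext x : 2
  exact LinearMap.congr_fun quarterTurn_mul_self x.1

/-- The subspace 𝒰 = S(β) ∩ S(β)^⊥ is invariant under (ξ,ξ') ↦ (ξ',−ξ)
and hence has even dimension. -/
theorem stmt6 {V U : Type*} [AddCommGroup V] [Module ℝ V]
    [NormedAddCommGroup U] [InnerProductSpace ℝ U] [FiniteDimensional ℝ U]
    (J : V →ₗ[ℝ] V) (hJ : ∀ X : V, J (J X) = -X)
    (α : V →ₗ[ℝ] V →ₗ[ℝ] U) (hα : ∀ X Y : V, α X Y = α Y X)
    (S : Submodule ℝ (U × U))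
    (hS : S = Submodule.span ℝ {z : U × U | ∃ X Y : V, z = (α X Y, α X (J Y))})
    (U₀ : Submodule ℝ (U × U))
    (hU₀ : ∀ z : U × U,
      z ∈ U₀ ↔ z ∈ S ∧ ∀ u ∈ S, ⟪z.1, u.1⟫ - ⟪z.2, u.2⟫ = 0) :
    (∀ z ∈ U₀, ((z.2 : U), -(z.1 : U)) ∈ U₀) ∧
      Even (Module.finrank ℝ U₀) :=
  stmt6_general J hJ α S hS U₀ hU₀
end

section
/- In a Lorentzian vector space, if u and v are light-like vectors with ⟨u,v⟩ = 0, then u and v are linearly dependent. -/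
/-!
For light-like `u` the time coordinate `u₀ = u (Fin.last n)` is nonzero, since on the
hyperplane `{w | w (Fin.last n) = 0}` the Minkowski form is positive definite. The vector
`w = v₀ • u - u₀ • v` lies in that hyperplane, and by bilinearity
`mink w w = v₀² mink u u - 2 v₀ u₀ mink u v + u₀² mink v v = 0`; hence `w = 0`, i.e.
`v = (v₀ / u₀) • u`.
-/

/-- The Minkowski bilinear form of signature (n,1) on ℝ^{n+1}. -/
noncomputable def mink (n : ℕ) (x y : Fin (n + 1) → ℝ) : ℝ :=
  (∑ i : Fin n, x i.castSucc * y i.castSucc) - x (Fin.last n) * y (Fin.last n)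

namespace Mink

variable {n : ℕ}

lemma smul_sub_smul_self (a b : ℝ) (u v : Fin (n + 1) → ℝ) :
    mink n (a • u - b • v) (a • u - b • v) =
      a ^ 2 * mink n u u - 2 * a * b * mink n u v + b ^ 2 * mink n v v := by
  have hspatial : ∑ i : Fin n, (a * u i.castSucc - b * v i.castSucc) *
        (a * u i.castSucc - b * v i.castSucc) =
      a ^ 2 * ∑ i : Fin n, u i.castSucc * u i.castSucc -
        2 * a * b * ∑ i : Fin n, u i.castSucc * v i.castSucc +
        b ^ 2 * ∑ i : Fin n, v i.castSucc * v i.castSucc := by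
    simp only [Finset.mul_sum, ← Finset.sum_sub_distrib, ← Finset.sum_add_distrib]
    exact Finset.sum_congr rfl fun _ _ => by ring
  simp only [mink, Pi.sub_apply, Pi.smul_apply, smul_eq_mul, hspatial]
  ring

lemma eq_zero_of_self_eq_zero_of_last_eq_zero {w : Fin (n + 1) → ℝ}
    (hw : mink n w w = 0) (hlast : w (Fin.last n) = 0) : w = 0 := by
  have hsum : ∑ i : Fin n, w i.castSucc * w i.castSucc = 0 := by
    simpa [mink, hlast] using hw
  have hspatial := (Finset.sum_eq_zero_iff_of_nonneg fun i _ => mul_self_nonneg (w i.castSucc)).mp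
    hsum
  funext i
  refine Fin.lastCases hlast (fun j => ?_) i
  exact mul_self_eq_zero.mp (hspatial j (Finset.mem_univ j))

lemma last_ne_zero_of_self_eq_zero {u : Fin (n + 1) → ℝ} (hu : mink n u u = 0) (hu0 : u ≠ 0) :
    u (Fin.last n) ≠ 0 :=
  fun hlast => hu0 (eq_zero_of_self_eq_zero_of_last_eq_zero hu hlast)

end Mink

theorem stmt12_general {n : ℕ} (u v : Fin (n + 1) → ℝ)
    (hu : mink n u u = 0) (hu0 : u ≠ 0)
    (hv : mink n v v = 0)
    (huv : mink n u v = 0) :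
    ∃ c : ℝ, v = c • u := by
  set a := u (Fin.last n)
  set b := v (Fin.last n)
  have ha : a ≠ 0 := Mink.last_ne_zero_of_self_eq_zero hu hu0
  have hw : b • u - a • v = 0 := by
    refine Mink.eq_zero_of_self_eq_zero_of_last_eq_zero ?_ ?_
    · rw [Mink.smul_sub_smul_self, hu, hv, huv]
      ring
    · simp only [Pi.sub_apply, Pi.smul_apply, smul_eq_mul]
      ring
  refine ⟨b / a, ?_⟩
  rw [sub_eq_zero] at hw
  rw [div_eq_inv_mul, mul_smul, hw, smul_smul, inv_mul_cancel₀ ha, one_smul]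

/-- Two mutually orthogonal light-like vectors in a Lorentzian space are
linearly dependent. -/
theorem stmt12 {n : ℕ} (u v : Fin (n + 1) → ℝ)
    (hu : mink n u u = 0) (hu0 : u ≠ 0)
    (hv : mink n v v = 0) (hv0 : v ≠ 0)
    (huv : mink n u v = 0) :
    ∃ c : ℝ, v = c • u :=
  stmt12_general u v hu hu0 hv huv
end
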